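/- arXiv:1105.1733 — 3 statements merged into one kernel-verified Lean document; each statement's English description precedes it below -/
import Mathlib

section
/- Let E be a real Banach space, let A : E →L[ℝ] E be a continuous linear endomorphism, let c : ℝ → E, let U ⊆ E be a nonempty set, and let T ≥ 0. For x ∈ E define the trajectory s_x(t) = exp(t • A) x + c(t) and the robustness f(x) = ⨅_{t ∈ [0,T]} infDist(s_x(t), U). Let x₀ ∈ E, t* ∈ [0,T], and d' ∈ E be such that infDist(s_{x₀}(t*) + d', U) < f(x₀). Then, setting d = exp(−t* • A) d', we have f(x₀ + d) < f(x₀), i.e. d is a descent direction for the robustness. -/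
open NormedSpace

/-- If the point `s_{x₀}(t*) + d'` is strictly closer to the unsafe set than the
robustness of `x₀`, then `d = exp(-t* • A) d'` is a strict descent direction for
the robustness function. -/
theorem descent_direction_strict
    {E : Type*} [NormedAddCommGroup E] [NormedSpace ℝ E] [CompleteSpace E]
    (A : E →L[ℝ] E) (c : ℝ → E) (U : Set E) (hne : U.Nonempty)
    (T : ℝ) (hT : 0 ≤ T)
    (s : E → ℝ → E) (hs : ∀ x t, s x t = (exp (t • A)) x + c t)
    (f : E → ℝ) (hf : ∀ x, f x = ⨅ t : Set.Icc (0 : ℝ) T, Metric.infDist (s x t) U)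
    (x₀ : E) (tstar : ℝ) (htstar : tstar ∈ Set.Icc (0 : ℝ) T)
    (d' : E) (hd' : Metric.infDist (s x₀ tstar + d') U < f x₀) :
    f (x₀ + (exp ((-tstar) • A)) d') < f x₀ := by
  set d := (exp ((-tstar) • A)) d' with hd
  have hcomm : Commute (tstar • A) ((-tstar) • A) := by
    rw [neg_smul]; exact (Commute.refl _).neg_right
  have hmul : exp (tstar • A) * exp ((-tstar) • A) = 1 := by
    let +nondep : NormedAlgebra ℚ (E →L[ℝ] E) := .restrictScalars ℚ ℝ (E →L[ℝ] E)
    rw [← exp_add_of_commute hcomm, neg_smul, add_neg_cancel, exp_zero]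
  have hkey : s (x₀ + d) tstar = s x₀ tstar + d' := by
    have : (exp (tstar • A)) d = d' := by
      have := congrArg (fun M : E →L[ℝ] E => M d') hmul
      simpa [ContinuousLinearMap.mul_apply, hd, neg_smul] using this
    rw [hs, hs, map_add, this]
    abel
  have hle : f (x₀ + d) ≤ Metric.infDist (s (x₀ + d) tstar) U := by
    rw [hf]
    exact ciInf_le ⟨0, fun y ⟨t, ht⟩ => ht ▸ Metric.infDist_nonneg⟩
      (⟨tstar, htstar⟩ : Set.Icc (0:ℝ) T)
  calc f (x₀ + d) ≤ Metric.infDist (s (x₀ + d) tstar) U := hle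
    _ = Metric.infDist (s x₀ tstar + d') U := by rw [hkey]
    _ < f x₀ := hd'
end

section
/- Let E be a real Banach space. Let A₀, A₁ : E →L[ℝ] E be continuous linear endomorphisms, let b₀, b₁ ∈ E, let Re : E → E be a reset map, and let τ : E → ℝ be a transition-time function. Fix t ∈ ℝ and x₀ ∈ E. Define the first-location flow s⁽⁰⁾(x, r) = exp(r • A₀) x + exp(r • A₀) ∫_{0}^{r} exp(−s • A₀) b₀ ds, and the two-location hybrid trajectory s(x, t) = exp((t − τ(x)) • A₁) (Re(s⁽⁰⁾(x, τ(x)))) + exp((t − τ(x)) • A₁) ∫_{0}^{t − τ(x)} exp(−s • A₁) b₁ ds. If τ is differentiable at x₀ and Re is differentiable at the point s⁽⁰⁾(x₀, τ(x₀)), then the map x ↦ s(x, t) is differentiable at x₀. -/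
open NormedSpace

lemma diff_exp_smul {E : Type*} [NormedAddCommGroup E] [NormedSpace ℝ E] [CompleteSpace E]
    (A : E →L[ℝ] E) : Differentiable ℝ (fun r : ℝ => exp (r • A)) :=
  fun r => (hasDerivAt_exp_smul_const A r).differentiableAt

lemma diff_prim {E : Type*} [NormedAddCommGroup E] [NormedSpace ℝ E] [CompleteSpace E]
    (A : E →L[ℝ] E) (b : E) :
    Differentiable ℝ (fun r : ℝ => ∫ s in (0 : ℝ)..r, (exp ((-s) • A)) b) := by
  have hf : Continuous fun s : ℝ => (exp ((-s) • A)) b := by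
    exact (((continuous_iff_continuousAt.2 fun x => (exp_analytic (𝕂 := ℝ) x).continuousAt).comp ((continuous_neg).smul continuous_const)).clm_apply
      continuous_const)
  exact fun r => ((hf.integral_hasStrictDerivAt 0 r).hasDerivAt).differentiableAt

/-- Differentiability, in the initial state, of a two-location hybrid trajectory:
flow with `ẋ = A₀ x + b₀` for time `τ(x)`, apply the reset `Re`, then flow with
`ẋ = A₁ x + b₁` for the remaining time `t - τ(x)`. -/
theorem differentiableAt_two_location_trajectory
    {E : Type*} [NormedAddCommGroup E] [NormedSpace ℝ E] [CompleteSpace E]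
    (A₀ A₁ : E →L[ℝ] E) (b₀ b₁ : E) (Re : E → E) (τ : E → ℝ)
    (t : ℝ) (x₀ : E)
    (s0 : E → ℝ → E)
    (hs0 : ∀ x r, s0 x r = (exp (r • A₀)) x +
      (exp (r • A₀)) (∫ s in (0 : ℝ)..r, (exp ((-s) • A₀)) b₀))
    (straj : E → ℝ → E)
    (hstraj : ∀ x t', straj x t' =
      (exp ((t' - τ x) • A₁)) (Re (s0 x (τ x))) +
        (exp ((t' - τ x) • A₁))
          (∫ s in (0 : ℝ)..(t' - τ x), (exp ((-s) • A₁)) b₁))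
    (hτ : DifferentiableAt ℝ τ x₀)
    (hRe : DifferentiableAt ℝ Re (s0 x₀ (τ x₀))) :
    DifferentiableAt ℝ (fun x => straj x t) x₀ := by
  have hg : DifferentiableAt ℝ (fun x => t - τ x) x₀ := (differentiableAt_const t).sub hτ
  have hL₁ : DifferentiableAt ℝ (fun x => exp ((t - τ x) • A₁)) x₀ :=
    ((diff_exp_smul A₁) (t - τ x₀)).comp (g := fun r : ℝ => exp (r • A₁)) x₀ hg
  have hs0x : DifferentiableAt ℝ (fun x => s0 x (τ x)) x₀ := by
    have h1 : DifferentiableAt ℝ (fun x => exp ((τ x) • A₀)) x₀ :=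
      ((diff_exp_smul A₀) (τ x₀)).comp x₀ hτ
    have h2 : DifferentiableAt ℝ
        (fun x => ∫ s in (0 : ℝ)..(τ x), (exp ((-s) • A₀)) b₀) x₀ :=
      ((diff_prim A₀ b₀) (τ x₀)).comp x₀ hτ
    have : DifferentiableAt ℝ (fun x => (exp ((τ x) • A₀)) x +
        (exp ((τ x) • A₀)) (∫ s in (0 : ℝ)..(τ x), (exp ((-s) • A₀)) b₀)) x₀ :=
      (h1.clm_apply differentiableAt_id).add (h1.clm_apply h2)
    exact this.congr_of_eventuallyEq (Filter.Eventually.of_forall fun x => hs0 x (τ x))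
  have hRe' : DifferentiableAt ℝ (fun x => Re (s0 x (τ x))) x₀ := hRe.comp x₀ hs0x
  have hI : DifferentiableAt ℝ
      (fun x => ∫ s in (0 : ℝ)..(t - τ x), (exp ((-s) • A₁)) b₁) x₀ :=
    ((diff_prim A₁ b₁) (t - τ x₀)).comp (g := fun r : ℝ => ∫ s in (0 : ℝ)..r, (exp ((-s) • A₁)) b₁) x₀ hg
  have : DifferentiableAt ℝ (fun x => (exp ((t - τ x) • A₁)) (Re (s0 x (τ x))) +
      (exp ((t - τ x) • A₁))
        (∫ s in (0 : ℝ)..(t - τ x), (exp ((-s) • A₁)) b₁)) x₀ :=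
    (hL₁.clm_apply hRe').add (hL₁.clm_apply hI)
  exact this.congr_of_eventuallyEq (Filter.Eventually.of_forall fun x => hstraj x t)
end

section
/- Let E be a finite-dimensional real normed vector space, let U ⊆ E be a nonempty set, let T > 0, and let s : E × ℝ → E be jointly continuous. For x ∈ E define the robustness f(x) = ⨅_{t ∈ [0,T]} infDist(s(x,t), U). Let x_Q ∈ E and let 0 ≤ t̄₁ ≤ t̄₂ ≤ T be such that: (i) there exists ε > 0 such that for all x in the open ball B(x_Q, ε) and all t ∈ [t̄₁, t̄₂], infDist(s(x,t), U) ≥ f(x_Q); and (ii) for all t ∈ [0, t̄₁] ∪ [t̄₂, T], infDist(s(x_Q, t), U) > f(x_Q). Then x_Q is a local minimum of f: there exists δ > 0 such that for all x ∈ B(x_Q, δ), f(x) ≥ f(x_Q). -/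
/-- Local-minimum certificate for the robustness function: if in a ball around `x_Q`
all trajectories stay at distance at least `f x_Q` from the unsafe set during
`[t̄₁, t̄₂]`, and the trajectory of `x_Q` stays strictly farther than `f x_Q` during
the remaining time, then `x_Q` is a local minimum of the robustness `f`. -/
theorem local_min_of_robustness
    {E : Type*} [NormedAddCommGroup E] [NormedSpace ℝ E] [FiniteDimensional ℝ E]
    (U : Set E) (hne : U.Nonempty) (T : ℝ) (hT : 0 < T)
    (s : E × ℝ → E) (hs : Continuous s)
    (f : E → ℝ) (hf : ∀ x, f x = ⨅ t : Set.Icc (0 : ℝ) T, Metric.infDist (s (x, t)) U)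
    (xQ : E) (t1 t2 : ℝ) (ht1 : 0 ≤ t1) (ht12 : t1 ≤ t2) (ht2 : t2 ≤ T)
    (h1 : ∃ ε > 0, ∀ x ∈ Metric.ball xQ ε, ∀ t ∈ Set.Icc t1 t2,
      f xQ ≤ Metric.infDist (s (x, t)) U)
    (h2 : ∀ t ∈ Set.Icc (0 : ℝ) t1 ∪ Set.Icc t2 T,
      f xQ < Metric.infDist (s (xQ, t)) U) :
    ∃ δ > 0, ∀ x ∈ Metric.ball xQ δ, f xQ ≤ f x := by
  obtain ⟨ε, hε, hball⟩ := h1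
  set g : E × ℝ → ℝ := fun p => Metric.infDist (s p) U with hg
  have hgc : Continuous g := (Metric.continuous_infDist_pt U).comp hs
  set K : Set ℝ := Set.Icc (0 : ℝ) t1 ∪ Set.Icc t2 T with hK
  have hKc : IsCompact K := (isCompact_Icc).union isCompact_Icc
  have hopen : IsOpen {p : E × ℝ | f xQ < g p} := isOpen_lt continuous_const hgc
  have hsub : {xQ} ×ˢ K ⊆ {p : E × ℝ | f xQ < g p} := by
    rintro ⟨x, t⟩ ⟨hx, ht⟩
    simp only [Set.mem_singleton_iff] at hx
    subst hx
    exact h2 t ht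
  obtain ⟨V, W, hV, _, hxV, hKW, hVW⟩ :=
    generalized_tube_lemma isCompact_singleton hKc hopen hsub
  obtain ⟨δ₀, hδ₀, hball₀⟩ := Metric.isOpen_iff.mp hV xQ (hxV rfl)
  refine ⟨min ε δ₀, lt_min hε hδ₀, fun x hx => ?_⟩
  have hxε : x ∈ Metric.ball xQ ε :=
    Metric.ball_subset_ball (min_le_left _ _) hx
  have hxδ : x ∈ V := hball₀ (Metric.ball_subset_ball (min_le_right _ _) hx)
  rw [hf x]
  have : Nonempty (Set.Icc (0 : ℝ) T) := ⟨⟨0, le_refl _, hT.le⟩⟩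
  refine le_ciInf fun ⟨t, ht0, htT⟩ => ?_
  by_cases hmid : t ∈ Set.Icc t1 t2
  · exact hball x hxε t hmid
  · have htK : t ∈ K := by
      rcases lt_or_ge t t1 with h | h
      · exact Or.inl ⟨ht0, h.le⟩
      · refine Or.inr ⟨?_, htT⟩
        by_contra hc
        exact hmid ⟨h, (not_le.mp hc).le⟩
    exact (hVW (Set.mk_mem_prod hxδ (hKW htK))).le
end
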